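/- arXiv:1703.00204 — 4 statements merged into one kernel-verified Lean document; each statement's English description precedes it below -/
import Mathlib

section
/- Let 0 < h < H, K > 0, μ > 0 and T_L, T_R ∈ ℝ. Set T_0 = (T_L + T_R)/2 and ΔT = (T_R − T_L)·(h/(4H))/(1 + μ/12). Define T_eq : [−h, h] → ℝ by T_eq(x) = T_0 + (μΔT/4)·(x/h) for |x| ≤ h/4; T_eq(x) = T_0 + (μΔT/16)·[3/2 − 2(2|x|/h − 1)²]·sgn(x) for h/4 ≤ |x| ≤ 3h/4; and T_eq(x) = T_0 + (μΔT/4)·(sgn(x) − x/h) for 3h/4 ≤ |x| ≤ h. Let T_c = (2/h)∫_{−h/4}^{h/4} T_eq dx, T_r = (2/h)∫_{h/4}^{3h/4} T_eq dx, T_l = (2/h)∫_{−3h/4}^{−h/4} T_eq dx, let T_0' = (T_c − (T_L + T_R)·(1/6)(h/(4H))²)/(1 − (1/3)(h/(4H))²), and let T_{int,±} = T_0' ± (T_R − T_L)·(h/(4H)) + (13/6)·(T_R − 2T_0' + T_L)·(h/(4H))². Then T_eq is an equilibrium of the controlled patch equation, i.e. K·T_eq''(x) + (Kμ/h²)·(T_{int,+}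 − T_r) = 0 for x ∈ (h/4, 3h/4), K·T_eq''(x) + (Kμ/h²)·(T_{int,−} − T_l) = 0 for x ∈ (−3h/4, −h/4), and T_eq''(x) = 0 for |x| < h/4 and for 3h/4 < |x| < h. -/
lemma quad_hasDeriv (a b c x : ℝ) :
    HasDerivAt (fun t : ℝ => a + b*t + c*t^2) (b + 2*c*x) x := by
  have h1 : HasDerivAt (fun t : ℝ => a + b*t + c*t^2)
      (0 + b*1 + c*(↑2*x^1)) x :=
    ((hasDerivAt_const x a).add ((hasDerivAt_id x).const_mul b)).add
      ((hasDerivAt_pow 2 x).const_mul c)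
  convert h1 using 1; ring

lemma quad_deriv2 (a b c x : ℝ) :
    deriv (deriv (fun t : ℝ => a + b*t + c*t^2)) x = 2*c := by
  have hd : deriv (fun t : ℝ => a + b*t + c*t^2) = fun t => b + 2*c*t := by
    funext t; exact (quad_hasDeriv a b c t).deriv
  rw [hd]
  have h2 : HasDerivAt (fun t : ℝ => b + 2*c*t) (2*c) x := by
    have := (hasDerivAt_id x).const_mul (2*c) |>.const_add b
    simpa using this
  exact h2.deriv

lemma deriv2_congr_on_open {f g : ℝ → ℝ} {s : Set ℝ} (hs : IsOpen s) {x : ℝ} (hx : x ∈ s)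
    (hfg : ∀ y ∈ s, f y = g y) :
    deriv (deriv f) x = deriv (deriv g) x := by
  have h1 : f =ᶠ[nhds x] g := Filter.eventuallyEq_of_mem (hs.mem_nhds hx) hfg
  exact (h1.deriv).deriv_eq

lemma integral_quad (a b c lo hi : ℝ) :
    (∫ x in lo..hi, (a + b*x + c*x^2)) =
      (a*hi + b*hi^2/2 + c*hi^3/3) - (a*lo + b*lo^2/2 + c*lo^3/3) := by
  have key : ∀ x : ℝ, HasDerivAt (fun t : ℝ => a*t + b*t^2/2 + c*t^3/3)
      (a + b*x + c*x^2) x := by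
    intro x
    have h1 : HasDerivAt (fun t : ℝ => a*t + b*t^2/2 + c*t^3/3)
        (a*1 + b*(↑2*x^1)/2 + c*(↑3*x^2)/3) x :=
      (((hasDerivAt_id x).const_mul a).add
        (((hasDerivAt_pow 2 x).const_mul b).div_const 2)).add
        (((hasDerivAt_pow 3 x).const_mul c).div_const 3)
    convert h1 using 1; ring
  rw [intervalIntegral.integral_eq_sub_of_hasDerivAt (fun x _ => key x)
    ((Continuous.intervalIntegrable (by continuity) lo hi))]

set_option maxHeartbeats 1600000 in
/-- The piecewise field `T_eq` is an equilibrium of the controlled patch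
continuum equation: `K T'' + (Kμ/h²)(T_int± − T_{r,l}) = 0` in the action
regions, and `T'' = 0` in the core and in the buffer. -/
theorem stmt8 (h H K μ T_L T_R : ℝ) (hh : 0 < h) (hhH : h < H)
    (hK : 0 < K) (hμ : 0 < μ)
    (T_0 ΔT : ℝ) (hT0 : T_0 = (T_L + T_R) / 2)
    (hΔT : ΔT = (T_R - T_L) * (h / (4 * H)) / (1 + μ / 12))
    (Teq : ℝ → ℝ)
    (hTeq1 : ∀ x : ℝ, |x| ≤ h / 4 → Teq x = T_0 + (μ * ΔT / 4) * (x / h))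
    (hTeq2 : ∀ x : ℝ, h / 4 ≤ |x| → |x| ≤ 3 * h / 4 →
      Teq x = T_0 + (μ * ΔT / 16) * (3 / 2 - 2 * (2 * |x| / h - 1) ^ 2) * Real.sign x)
    (hTeq3 : ∀ x : ℝ, 3 * h / 4 ≤ |x| → |x| ≤ h →
      Teq x = T_0 + (μ * ΔT / 4) * (Real.sign x - x / h))
    (T_c T_r T_l T_0' Tintp Tintm : ℝ)
    (hTc : T_c = (2 / h) * ∫ x in (-(h / 4))..(h / 4), Teq x)
    (hTr : T_r = (2 / h) * ∫ x in (h / 4)..(3 * h / 4), Teq x)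
    (hTl : T_l = (2 / h) * ∫ x in (-(3 * h / 4))..(-(h / 4)), Teq x)
    (hT0' : T_0' = (T_c - (T_L + T_R) * ((1 / 6) * (h / (4 * H)) ^ 2))
      / (1 - (1 / 3) * (h / (4 * H)) ^ 2))
    (hTintp : Tintp = T_0' + (T_R - T_L) * (h / (4 * H))
      + (13 / 6) * (T_R - 2 * T_0' + T_L) * (h / (4 * H)) ^ 2)
    (hTintm : Tintm = T_0' - (T_R - T_L) * (h / (4 * H))
      + (13 / 6) * (T_R - 2 * T_0' + T_L) * (h / (4 * H)) ^ 2) :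
    (∀ x ∈ Set.Ioo (h / 4) (3 * h / 4),
      K * deriv (deriv Teq) x + (K * μ / h ^ 2) * (Tintp - T_r) = 0) ∧
    (∀ x ∈ Set.Ioo (-(3 * h / 4)) (-(h / 4)),
      K * deriv (deriv Teq) x + (K * μ / h ^ 2) * (Tintm - T_l) = 0) ∧
    (∀ x : ℝ, |x| < h / 4 → deriv (deriv Teq) x = 0) ∧
    (∀ x : ℝ, 3 * h / 4 < |x| → |x| < h → deriv (deriv Teq) x = 0) := by
  have hhne : h ≠ 0 := ne_of_gt hh
  have hH0 : 0 < H := lt_trans hh hhH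
  have hHne : H ≠ 0 := ne_of_gt hH0
  have h12 : (1:ℝ) + μ / 12 ≠ 0 := by positivity
  -- value of T_c
  have Tc_eq : T_c = T_0 := by
    rw [hTc, intervalIntegral.integral_congr
      (g := fun t : ℝ => T_0 + (μ*ΔT/(4*h))*t + 0*t^2)
      (by
        intro y hy
        rw [Set.uIcc_of_le (by linarith)] at hy
        have := abs_le.mpr ⟨hy.1, hy.2⟩
        rw [hTeq1 y this]
        field_simp
        try ring),
      integral_quad]
    field_simp
    try ring
  -- value of T_r
  have Tr_eq : T_r = T_0 + μ * ΔT / 12 := by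
    rw [hTr, intervalIntegral.integral_congr
      (g := fun t : ℝ => (T_0 - μ*ΔT/32) + (μ*ΔT/(2*h))*t + (-(μ*ΔT/(2*h^2)))*t^2)
      (by
        intro y hy
        rw [Set.uIcc_of_le (by linarith)] at hy
        have hy0 : 0 < y := lt_of_lt_of_le (by linarith) hy.1
        have hay : |y| = y := abs_of_pos hy0
        rw [hTeq2 y (by rw [hay]; exact hy.1) (by rw [hay]; exact hy.2), hay,
          Real.sign_of_pos hy0]
        field_simp
        try ring),
      integral_quad]
    field_simp
    try ring
  -- value of T_l
  have Tl_eq : T_l = T_0 - μ * ΔT / 12 := by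
    rw [hTl, intervalIntegral.integral_congr
      (g := fun t : ℝ => (T_0 + μ*ΔT/32) + (μ*ΔT/(2*h))*t + (μ*ΔT/(2*h^2))*t^2)
      (by
        intro y hy
        rw [Set.uIcc_of_le (by linarith)] at hy
        have hy0 : y < 0 := lt_of_le_of_lt hy.2 (by linarith)
        have hay : |y| = -y := abs_of_neg hy0
        rw [hTeq2 y (by rw [hay]; linarith [hy.2]) (by rw [hay]; linarith [hy.1]), hay,
          Real.sign_of_neg hy0]
        field_simp
        try ring),
      integral_quad]
    field_simp
    try ring
  -- T_0' = T_0
  have hden : (1:ℝ) - (1/3) * (h / (4*H))^2 ≠ 0 := by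
    have h1 : h / (4*H) < 1 := by
      rw [div_lt_one (by linarith)]; linarith
    have h0 : 0 < h / (4*H) := div_pos hh (by linarith)
    nlinarith
  have T0'_eq : T_0' = T_0 := by
    rw [hT0', Tc_eq, hT0, div_eq_iff hden]; ring
  -- target differences
  have hrp : Tintp - T_r = ΔT := by
    rw [hTintp, T0'_eq, Tr_eq, hT0, hΔT]
    field_simp
    try ring
  have hrm : Tintm - T_l = -ΔT := by
    rw [hTintm, T0'_eq, Tl_eq, hT0, hΔT]
    field_simp
    try ring
  refine ⟨?_, ?_, ?_, ?_⟩
  · intro x hx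
    rw [deriv2_congr_on_open isOpen_Ioo hx
      (g := fun t : ℝ => (T_0 - μ*ΔT/32) + (μ*ΔT/(2*h))*t + (-(μ*ΔT/(2*h^2)))*t^2)
      (by
        intro y hy
        have hy0 : 0 < y := lt_trans (by linarith) hy.1
        have hay : |y| = y := abs_of_pos hy0
        rw [hTeq2 y (by rw [hay]; linarith [hy.1]) (by rw [hay]; linarith [hy.2]), hay,
          Real.sign_of_pos hy0]
        field_simp
        try ring),
      quad_deriv2, hrp]
    field_simp
    try ring
  · intro x hx
    rw [deriv2_congr_on_open isOpen_Ioo hx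
      (g := fun t : ℝ => (T_0 + μ*ΔT/32) + (μ*ΔT/(2*h))*t + (μ*ΔT/(2*h^2))*t^2)
      (by
        intro y hy
        have hy0 : y < 0 := lt_trans hy.2 (by linarith)
        have hay : |y| = -y := abs_of_neg hy0
        rw [hTeq2 y (by rw [hay]; linarith [hy.2]) (by rw [hay]; linarith [hy.1]), hay,
          Real.sign_of_neg hy0]
        field_simp
        try ring),
      quad_deriv2, hrm]
    field_simp
    ring
  · intro x hx
    have hx' : x ∈ Set.Ioo (-(h/4)) (h/4) := by
      rw [Set.mem_Ioo]; constructor <;> [linarith [neg_abs_le x]; linarith [le_abs_self x]]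
    rw [deriv2_congr_on_open isOpen_Ioo hx'
      (g := fun t : ℝ => T_0 + (μ*ΔT/(4*h))*t + 0*t^2)
      (by
        intro y hy
        have : |y| ≤ h/4 := abs_le.mpr ⟨hy.1.le, hy.2.le⟩
        rw [hTeq1 y this]
        field_simp
        try ring),
      quad_deriv2]
    ring
  · intro x hx1 hx2
    rcases lt_or_ge 0 x with hx0 | hx0
    · have hax : |x| = x := abs_of_pos hx0
      have hx' : x ∈ Set.Ioo (3*h/4) h := by
        rw [Set.mem_Ioo]; rw [hax] at hx1 hx2; exact ⟨hx1, hx2⟩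
      rw [deriv2_congr_on_open isOpen_Ioo hx'
        (g := fun t : ℝ => (T_0 + μ*ΔT/4) + (-(μ*ΔT/(4*h)))*t + 0*t^2)
        (by
          intro y hy
          have hy0 : 0 < y := lt_trans (by linarith) hy.1
          have hay : |y| = y := abs_of_pos hy0
          rw [hTeq3 y (by rw [hay]; linarith [hy.1]) (by rw [hay]; linarith [hy.2]),
            Real.sign_of_pos hy0]
          field_simp
          try ring),
        quad_deriv2]
      ring
    · have hxneg : x < 0 := by
        have hxne : x ≠ 0 := by intro h'; rw [h', abs_zero] at hx1; linarith
        exact lt_of_le_of_ne hx0 hxne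
      have hax : |x| = -x := abs_of_neg hxneg
      have hx' : x ∈ Set.Ioo (-h) (-(3*h/4)) := by
        rw [Set.mem_Ioo]; rw [hax] at hx1 hx2; constructor <;> linarith
      rw [deriv2_congr_on_open isOpen_Ioo hx'
        (g := fun t : ℝ => (T_0 - μ*ΔT/4) + (-(μ*ΔT/(4*h)))*t + 0*t^2)
        (by
          intro y hy
          have hy0 : y < 0 := lt_trans hy.2 (by linarith)
          have hay : |y| = -y := abs_of_neg hy0
          rw [hTeq3 y (by rw [hay]; linarith [hy.2]) (by rw [hay]; linarith [hy.1]),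
            Real.sign_of_neg hy0]
          field_simp
          try ring),
        quad_deriv2]
      ring
end

section
/- Let μ > 0 and 0 < r < 1, and set c = (1 − r²/48)/(1 − 7r²/48). Then c > 0, and for every positive integer m there exists κ in the open interval (2π(2m−1), 2π(2m+1)) such that (4/κ)·tan(κ/4) = c·(1 − κ²/μ). Hence the symmetric characteristic equation has infinitely many positive wavenumber solutions. -/
/-!
Put `κ = 4 (mπ + arctan t)`. As `t` runs over `ℝ`, `κ` sweeps the branch
`(2π(2m−1), 2π(2m+1))` of `tan (κ/4)` and `tan (κ/4) = t`, so the equation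
`tan (κ/4) = (κ/4) F(κ)` becomes the fixed point equation `t = g (arctan t)` with
`g s = (mπ + s) F(4(mπ + s))`. Since `arctan` takes values in a compact interval, the
right-hand side is a bounded continuous function of `t`, and such a function has a fixed point
by the intermediate value theorem. Any continuous right-hand side, in particular the parabola
`c (1 − κ²/μ)`, therefore meets every branch of `(4/κ) tan (κ/4)`.
-/

open Real Set

theorem exists_eq_self_of_continuous_of_abs_le {f : ℝ → ℝ} (hf : Continuous f) {B : ℝ}
    (hB : ∀ x, |f x| ≤ B) : ∃ x, f x = x := by
  have hB0 : 0 ≤ B := (abs_nonneg _).trans (hB 0)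
  have hleft : -B - f (-B) ≤ 0 := by linarith [(abs_le.mp (hB (-B))).1]
  have hright : 0 ≤ B - f B := by linarith [(abs_le.mp (hB B)).2]
  obtain ⟨x, -, hx⟩ := intermediate_value_Icc (by linarith) (continuous_id.sub hf).continuousOn
    ⟨hleft, hright⟩
  exact ⟨x, by linarith [show x - f x = 0 from hx]⟩

theorem exists_comp_arctan_eq_self {g : ℝ → ℝ} (hg : Continuous g) : ∃ t, g (arctan t) = t := by
  obtain ⟨B, hB⟩ := isCompact_Icc.exists_bound_of_continuousOn (s := Icc (-(π / 2)) (π / 2))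
    hg.continuousOn
  exact exists_eq_self_of_continuous_of_abs_le (hg.comp continuous_arctan)
    fun t => hB _ (Ioo_subset_Icc_self (arctan_mem_Ioo t))

theorem exists_tan_quarter_eq_mul_of_continuous {F : ℝ → ℝ} (hF : Continuous F) (m : ℤ) :
    ∃ κ ∈ Ioo (2 * π * (2 * m - 1)) (2 * π * (2 * m + 1)), tan (κ / 4) = κ / 4 * F κ := by
  obtain ⟨t, ht⟩ := exists_comp_arctan_eq_self (g := fun s => (m * π + s) * F (4 * (m * π + s)))
    (by fun_prop)
  obtain ⟨hlow, hhigh⟩ := arctan_mem_Ioo t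
  refine ⟨4 * (m * π + arctan t), ⟨by linarith, by linarith⟩, ?_⟩
  rw [show 4 * (m * π + arctan t) / 4 = arctan t + m * π by ring,
    tan_periodic.int_mul m (arctan t), tan_arctan]
  convert ht.symm using 2
  ring

theorem exists_four_div_mul_tan_quarter_eq_of_continuous {F : ℝ → ℝ} (hF : Continuous F) {m : ℕ}
    (hm : 0 < m) :
    ∃ κ ∈ Ioo (2 * π * (2 * m - 1)) (2 * π * (2 * m + 1)), 4 / κ * tan (κ / 4) = F κ := by
  obtain ⟨κ, hκ, heq⟩ := exists_tan_quarter_eq_mul_of_continuous hF m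
  push_cast at hκ
  have hm1 : (1 : ℝ) ≤ m := by exact_mod_cast hm
  have hκ0 : κ ≠ 0 := by nlinarith [hκ.1, pi_pos]
  refine ⟨κ, hκ, ?_⟩
  rw [heq]
  field_simp

theorem stmt9_general (μ r : ℝ) (hr0 : 0 < r) (hr1 : r < 1)
    (c : ℝ) (hc : c = (1 - r ^ 2 / 48) / (1 - 7 * r ^ 2 / 48)) :
    0 < c ∧
    (∀ m : ℕ, 0 < m →
      ∃ κ ∈ Set.Ioo (2 * Real.pi * (2 * (m : ℝ) - 1)) (2 * Real.pi * (2 * (m : ℝ) + 1)),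
        (4 / κ) * Real.tan (κ / 4) = c * (1 - κ ^ 2 / μ)) ∧
    {κ : ℝ | 0 < κ ∧ (4 / κ) * Real.tan (κ / 4) = c * (1 - κ ^ 2 / μ)}.Infinite := by
  have hr2 : r ^ 2 < 1 := by nlinarith
  have hroots (m : ℕ) (hm : 0 < m) := exists_four_div_mul_tan_quarter_eq_of_continuous
    (F := fun κ => c * (1 - κ ^ 2 / μ)) (by fun_prop) hm
  refine ⟨hc ▸ div_pos (by nlinarith) (by nlinarith), hroots, ?_⟩
  refine Set.infinite_of_forall_exists_gt fun a => ?_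
  obtain ⟨κ, ⟨hκ, -⟩, heq⟩ := hroots (⌈a⌉₊ + 1) (Nat.succ_pos _)
  have hceil : a ≤ ⌈a⌉₊ := Nat.le_ceil a
  have hceil0 : (0 : ℝ) ≤ ⌈a⌉₊ := Nat.cast_nonneg _
  push_cast at hκ
  exact ⟨κ, ⟨by nlinarith [pi_gt_three], heq⟩, by nlinarith [pi_gt_three]⟩

/-- The symmetric characteristic equation `(4/κ)tan(κ/4) = c(1 − κ²/μ)` with
`c = (1−r²/48)/(1−7r²/48) > 0` has a root in each interval
`(2π(2m−1), 2π(2m+1))`, hence infinitely many positive roots. -/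
theorem stmt9 (μ r : ℝ) (hμ : 0 < μ) (hr0 : 0 < r) (hr1 : r < 1)
    (c : ℝ) (hc : c = (1 - r ^ 2 / 48) / (1 - 7 * r ^ 2 / 48)) :
    0 < c ∧
    (∀ m : ℕ, 0 < m →
      ∃ κ ∈ Set.Ioo (2 * Real.pi * (2 * (m : ℝ) - 1)) (2 * Real.pi * (2 * (m : ℝ) + 1)),
        (4 / κ) * Real.tan (κ / 4) = c * (1 - κ ^ 2 / μ)) ∧
    {κ : ℝ | 0 < κ ∧ (4 / κ) * Real.tan (κ / 4) = c * (1 - κ ^ 2 / μ)}.Infinite :=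
  stmt9_general μ r hr0 hr1 c hc
end

section
/- Let μ > 0. For every positive integer m there exists κ in the open interval (π(2m−1), π(2m+1)) such that (2/κ)·tan(κ/2) = 1 − κ²/μ. Hence the antisymmetric characteristic equation has infinitely many positive wavenumber solutions. -/
/-!
On `(π(2m-1), π(2m+1))` the map `κ ↦ κ/2 - mπ` lands in `(-π/2, π/2)`, so `tan (κ/2)` is
continuous there and runs from `-∞` to `+∞`, while `2/κ` stays positive and bounded and
`1 - κ²/μ` stays bounded. The difference of the two sides of the equation therefore takes every real
value on that interval, in particular `0`. The roots found for distinct `m` exceed `π(2m-1)`, so they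
are unbounded.
-/

open Real Set Filter Topology

namespace CharacteristicEquation

variable {m : ℤ}

lemma half_sub_mul_pi_mem_Ioo {x : ℝ} (hx : x ∈ Ioo (π * (2 * m - 1)) (π * (2 * m + 1))) :
    x / 2 - m * π ∈ Ioo (-(π / 2)) (π / 2) := by
  constructor <;> linarith [hx.1, hx.2]

lemma continuousOn_tan_half :
    ContinuousOn (fun x => tan (x / 2)) (Ioo (π * (2 * m - 1)) (π * (2 * m + 1))) := by
  refine (continuousOn_tan_Ioo.comp (by fun_prop) fun x hx => half_sub_mul_pi_mem_Ioo hx).congr ?_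
  intro x _
  exact (tan_sub_int_mul_pi (x / 2) m).symm

lemma tendsto_tan_half_nhdsGT :
    Tendsto (fun x => tan (x / 2)) (𝓝[>] (π * (2 * m - 1))) atBot := by
  have hshift : Tendsto (fun x => x / 2 - m * π) (𝓝[>] (π * (2 * m - 1))) (𝓝[>] (-(π / 2))) := by
    refine tendsto_nhdsWithin_of_tendsto_nhds_of_eventually_within _ ?_ ?_
    · have : Continuous fun x : ℝ => x / 2 - m * π := by fun_prop
      exact (this.tendsto' _ _ (by ring)).mono_left nhdsWithin_le_nhds
    · filter_upwards [self_mem_nhdsWithin] with x (hx : π * (2 * m - 1) < x)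
      show -(π / 2) < x / 2 - m * π
      linarith
  exact (tendsto_tan_neg_pi_div_two.comp hshift).congr fun x => tan_sub_int_mul_pi (x / 2) m

lemma tendsto_tan_half_nhdsLT :
    Tendsto (fun x => tan (x / 2)) (𝓝[<] (π * (2 * m + 1))) atTop := by
  have hshift : Tendsto (fun x => x / 2 - m * π) (𝓝[<] (π * (2 * m + 1))) (𝓝[<] (π / 2)) := by
    refine tendsto_nhdsWithin_of_tendsto_nhds_of_eventually_within _ ?_ ?_
    · have : Continuous fun x : ℝ => x / 2 - m * π := by fun_prop
      exact (this.tendsto' _ _ (by ring)).mono_left nhdsWithin_le_nhds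
    · filter_upwards [self_mem_nhdsWithin] with x (hx : x < π * (2 * m + 1))
      show x / 2 - m * π < π / 2
      linarith
  exact (tendsto_tan_pi_div_two.comp hshift).congr fun x => tan_sub_int_mul_pi (x / 2) m

theorem exists_two_div_mul_tan_half_eq (hm : 0 < m) {g : ℝ → ℝ} (hg : Continuous g) :
    ∃ κ ∈ Ioo (π * (2 * m - 1)) (π * (2 * m + 1)), 2 / κ * tan (κ / 2) = g κ := by
  set a := π * (2 * m - 1)
  set b := π * (2 * m + 1)
  have hm' : (1 : ℝ) ≤ m := by exact_mod_cast hm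
  have ha : 0 < a := mul_pos pi_pos (by linarith)
  have hab : a < b := mul_lt_mul_of_pos_left (by linarith) pi_pos
  have hb : 0 < b := ha.trans hab
  have hcont : ContinuousOn (fun x => 2 / x * tan (x / 2) - g x) (Ioo a b) :=
    ((continuousOn_const.div continuousOn_id fun x hx => (ha.trans hx.1).ne').mul
      continuousOn_tan_half).sub hg.continuousOn
  have hdiv (c : ℝ) (hc : 0 < c) : Tendsto (fun x : ℝ => 2 / x) (𝓝 c) (𝓝 (2 / c)) :=
    tendsto_const_nhds.div tendsto_id hc.ne'
  have hbot : Tendsto (fun x => 2 / x * tan (x / 2) - g x) (𝓝[>] a) atBot := by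
    simp only [sub_eq_add_neg]
    exact ((hdiv a ha).mono_left nhdsWithin_le_nhds |>.pos_mul_atBot (by positivity)
      tendsto_tan_half_nhdsGT).atBot_add ((hg.tendsto a).neg.mono_left nhdsWithin_le_nhds)
  have htop : Tendsto (fun x => 2 / x * tan (x / 2) - g x) (𝓝[<] b) atTop := by
    simp only [sub_eq_add_neg]
    exact ((hdiv b hb).mono_left nhdsWithin_le_nhds |>.pos_mul_atTop (by positivity)
      tendsto_tan_half_nhdsLT).atTop_add
      ((hg.tendsto b).neg.mono_left nhdsWithin_le_nhds)
  obtain ⟨κ, hκ, hroot⟩ := hcont.surjOn_of_tendsto (nonempty_Ioo.2 hab)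
    ((tendsto_comp_coe_Ioo_atBot hab).2 hbot) ((tendsto_comp_coe_Ioo_atTop hab).2 htop)
    (mem_univ 0)
  exact ⟨κ, hκ, sub_eq_zero.1 hroot⟩

end CharacteristicEquation

open CharacteristicEquation in
theorem stmt10_general (μ : ℝ) :
    (∀ m : ℕ, 0 < m →
      ∃ κ ∈ Set.Ioo (Real.pi * (2 * (m : ℝ) - 1)) (Real.pi * (2 * (m : ℝ) + 1)),
        (2 / κ) * Real.tan (κ / 2) = 1 - κ ^ 2 / μ) ∧
    {κ : ℝ | 0 < κ ∧ (2 / κ) * Real.tan (κ / 2) = 1 - κ ^ 2 / μ}.Infinite := by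
  have hroots (m : ℕ) (hm : 0 < m) :
      ∃ κ ∈ Ioo (π * (2 * (m : ℝ) - 1)) (π * (2 * (m : ℝ) + 1)),
        2 / κ * tan (κ / 2) = 1 - κ ^ 2 / μ := by
    simpa only [Int.cast_natCast] using exists_two_div_mul_tan_half_eq (m := m)
      (by exact_mod_cast hm) (g := fun κ : ℝ => 1 - κ ^ 2 / μ) (by fun_prop)
  refine ⟨hroots, Set.infinite_of_not_bddAbove fun ⟨B, hB⟩ => ?_⟩
  obtain ⟨n, hn⟩ := exists_nat_gt B
  obtain ⟨κ, hκ, hroot⟩ := hroots (n + 1) n.succ_pos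
  have hκ_gt : (n : ℝ) < κ := by
    push_cast at hκ
    nlinarith [pi_gt_three, hκ.1, (n.cast_nonneg : (0 : ℝ) ≤ n)]
  have hκ_le : κ ≤ B := hB ⟨by linarith [n.cast_nonneg (α := ℝ)], hroot⟩
  linarith

/-- The antisymmetric characteristic equation `(2/κ)tan(κ/2) = 1 − κ²/μ` has a
root in each interval `(π(2m−1), π(2m+1))`, hence infinitely many positive
roots. -/
theorem stmt10 (μ : ℝ) (hμ : 0 < μ) :
    (∀ m : ℕ, 0 < m →
      ∃ κ ∈ Set.Ioo (Real.pi * (2 * (m : ℝ) - 1)) (Real.pi * (2 * (m : ℝ) + 1)),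
        (2 / κ) * Real.tan (κ / 2) = 1 - κ ^ 2 / μ) ∧
    {κ : ℝ | 0 < κ ∧ (2 / κ) * Real.tan (κ / 2) = 1 - κ ^ 2 / μ}.Infinite :=
  stmt10_general μ
end

section
/- Let μ > 0. Suppose κ : (0, 1) → ℝ is a function such that for every r ∈ (0, 1), κ(r) > 0 and (4/κ(r))·tan(κ(r)/4) = ((1 − r²/48)/(1 − 7r²/48))·(1 − κ(r)²/μ), and suppose κ(r) → 0 as r → 0⁺. Then κ(r)/r → √(6/(1 + 48/μ)) as r → 0⁺. -/
/-!
Write `F(κ) = (4/κ) tan(κ/4) = 1 + κ²/48 + O(κ⁴)` and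
`A(r) = (1 - r²/48)/(1 - 7r²/48) = 1 + r²/8 + O(r⁴)`.
The characteristic equation `F(κ) = A(r) (1 - κ²/μ)` rearranges to
`(A(r) - 1)/κ² = (F(κ) - 1)/κ² + A(r)/μ → 1/48 + 1/μ`, while `(A(r) - 1)/r² → 1/8`.
Dividing, `(κ/r)² → (1/8)/(1/48 + 1/μ) = 6/(1 + 48/μ)`.
-/

open Filter Real Set
open scoped Topology

namespace Real

theorem tendsto_tan_div_self : Tendsto (fun t => tan t / t) (𝓝[≠] 0) (𝓝 1) := by
  have h : HasDerivAt tan 1 0 := by simpa using hasDerivAt_tan (x := 0) (by simp)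
  refine (hasDerivAt_iff_tendsto_slope.mp h).congr fun t => ?_
  simp [slope, div_eq_inv_mul]

theorem tendsto_tan_sub_self_div_pow_three :
    Tendsto (fun t => (tan t - t) / t ^ 3) (𝓝[≠] 0) (𝓝 (1 / 3)) := by
  have hcos : ∀ᶠ t in 𝓝[≠] (0 : ℝ), cos t ≠ 0 :=
    nhdsWithin_le_nhds <| (continuous_cos.tendsto 0).eventually_ne (by simp)
  refine HasDerivAt.lhopital_zero_nhdsNE (f' := fun t => 1 / cos t ^ 2 - 1)
    (g' := fun t => 3 * t ^ 2) ?_ ?_ ?_ ?_ ?_ ?_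
  · filter_upwards [hcos] with t ht using (hasDerivAt_tan ht).sub (hasDerivAt_id t)
  · exact Eventually.of_forall fun t => by simpa using hasDerivAt_pow 3 t
  · filter_upwards [self_mem_nhdsWithin] with t (ht : t ≠ 0) using by positivity
  · have : ContinuousAt (fun t => tan t - t) 0 :=
      (continuousAt_tan.mpr (by simp)).sub continuousAt_id
    simpa using this.tendsto.mono_left nhdsWithin_le_nhds
  · simpa using ((continuous_pow 3).tendsto (0 : ℝ)).mono_left nhdsWithin_le_nhds
  · -- `1 / cos² t - 1 = tan² t`
    have h := (tendsto_tan_div_self.pow 2).div_const 3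
    rw [one_pow] at h
    refine h.congr' ?_
    filter_upwards [hcos] with t ht
    rw [one_div, ← inv_one_add_tan_sq ht, inv_inv]
    ring

theorem tendsto_div_mul_tan_div_sub_one_div_sq {a : ℝ} (ha : a ≠ 0) :
    Tendsto (fun k => ((a / k) * tan (k / a) - 1) / k ^ 2) (𝓝[≠] 0)
      (𝓝 (1 / (3 * a ^ 2))) := by
  have hscale : Tendsto (fun k => k / a) (𝓝[≠] 0) (𝓝[≠] 0) :=
    tendsto_nhdsWithin_iff.mpr
      ⟨by simpa using ((continuous_id.div_const a).tendsto 0).mono_left nhdsWithin_le_nhds,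
        by filter_upwards [self_mem_nhdsWithin] with k (hk : k ≠ 0) using div_ne_zero hk ha⟩
  rw [show 1 / (3 * a ^ 2) = 1 / 3 / a ^ 2 by ring]
  refine ((tendsto_tan_sub_self_div_pow_three.comp hscale).div_const (a ^ 2)).congr' ?_
  filter_upwards [self_mem_nhdsWithin] with k (hk : k ≠ 0)
  simp only [Function.comp_apply]
  field_simp

end Real

theorem tendsto_patch_factor_sub_one_div_sq :
    Tendsto (fun r : ℝ => ((1 - r ^ 2 / 48) / (1 - 7 * r ^ 2 / 48) - 1) / r ^ 2) (𝓝[≠] 0)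
      (𝓝 (1 / 8)) := by
  have hden : Tendsto (fun r : ℝ => 8 - 7 * r ^ 2 / 6) (𝓝[≠] 0) (𝓝 8) := by
    have : Continuous (fun r : ℝ => 8 - 7 * r ^ 2 / 6) := by fun_prop
    simpa using (this.tendsto 0).mono_left nhdsWithin_le_nhds
  rw [one_div]
  refine (hden.inv₀ (by norm_num)).congr' ?_
  have hden_ne : ∀ᶠ r in 𝓝[≠] (0 : ℝ), 8 - 7 * r ^ 2 / 6 ≠ 0 :=
    hden.eventually_ne (by norm_num)
  filter_upwards [self_mem_nhdsWithin, hden_ne] with r (hr : r ≠ 0) hr'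
  have : 1 - 7 * r ^ 2 / 48 ≠ 0 := fun h => hr' (by linear_combination 8 * h)
  rw [div_sub_one this]
  field_simp
  ring

theorem tendsto_patch_factor :
    Tendsto (fun r : ℝ => (1 - r ^ 2 / 48) / (1 - 7 * r ^ 2 / 48)) (𝓝 0) (𝓝 1) := by
  have : ContinuousAt (fun r : ℝ => (1 - r ^ 2 / 48) / (1 - 7 * r ^ 2 / 48)) 0 :=
    ContinuousAt.div (by fun_prop) (by fun_prop) (by norm_num)
  simpa using this.tendsto

theorem div_sq_eq_of_eq_mul_one_sub {F A k r μ : ℝ} (hk : k ≠ 0) (hr : r ≠ 0) (hA : A ≠ 1)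
    (h : F = A * (1 - k ^ 2 / μ)) :
    (k / r) ^ 2 = ((A - 1) / r ^ 2) / ((F - 1) / k ^ 2 + A / μ) := by
  have hquot : (F - 1) / k ^ 2 + A / μ = (A - 1) / k ^ 2 := by
    rcases eq_or_ne μ 0 with rfl | hμ
    · simp [h]
    · rw [h]; field_simp; ring
  rw [hquot]
  field_simp [sub_ne_zero.mpr hA]

theorem Filter.Tendsto.of_sq_of_nonneg {α : Type*} {l : Filter α} {f : α → ℝ} {x : ℝ}
    (h : Tendsto (fun a => f a ^ 2) l (𝓝 x)) (hf : ∀ᶠ a in l, 0 ≤ f a) :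
    Tendsto f l (𝓝 (√x)) :=
  h.sqrt.congr' (hf.mono fun _ ha => sqrt_sq ha)

/-- The small root `κ(r)` of the symmetric characteristic equation satisfies
`κ(r)/r → √(6/(1 + 48/μ))` as `r → 0⁺`; that is, the exceptional macroscale
mode has `kH ≈ √(6/(1+48/μ))`. -/
theorem stmt11 (μ : ℝ) (hμ : 0 < μ) (κ : ℝ → ℝ)
    (hpos : ∀ r ∈ Set.Ioo (0 : ℝ) 1, 0 < κ r)
    (heq : ∀ r ∈ Set.Ioo (0 : ℝ) 1,
      (4 / κ r) * Real.tan (κ r / 4)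
        = ((1 - r ^ 2 / 48) / (1 - 7 * r ^ 2 / 48)) * (1 - (κ r) ^ 2 / μ))
    (hlim : Filter.Tendsto κ (nhdsWithin 0 (Set.Ioi 0)) (nhds 0)) :
    Filter.Tendsto (fun r => κ r / r) (nhdsWithin 0 (Set.Ioi 0))
      (nhds (Real.sqrt (6 / (1 + 48 / μ)))) := by
  have hIoo : ∀ᶠ r in 𝓝[>] (0 : ℝ), r ∈ Ioo 0 1 := Ioo_mem_nhdsGT one_pos
  have hκ : Tendsto κ (𝓝[>] 0) (𝓝[≠] 0) :=
    tendsto_nhdsWithin_iff.mpr ⟨hlim, hIoo.mono fun r hr => (hpos r hr).ne'⟩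
  have htan := (tendsto_div_mul_tan_div_sub_one_div_sq four_ne_zero).comp hκ
  have hfactor := tendsto_patch_factor_sub_one_div_sq.mono_left (nhdsGT_le_nhdsNE 0)
  have hA := (tendsto_patch_factor.mono_left (nhdsWithin_le_nhds (s := Ioi 0))).div_const μ
  have hquot := hfactor.div (htan.add hA) (by positivity)
  have hlimit : 1 / 8 / (1 / (3 * 4 ^ 2) + 1 / μ) = 6 / (1 + 48 / μ) := by
    field_simp; ring
  rw [hlimit] at hquot
  refine Tendsto.of_sq_of_nonneg (hquot.congr' ?_) ?_
  · filter_upwards [hIoo, hfactor.eventually_ne (by norm_num : (1 / 8 : ℝ) ≠ 0)] with r hr hr'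
    exact (div_sq_eq_of_eq_mul_one_sub (hpos r hr).ne' hr.1.ne'
      (fun h => hr' (by simp [h])) (heq r hr)).symm
  · filter_upwards [hIoo] with r hr using (div_pos (hpos r hr) hr.1).le
end
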